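/- Let L be a locally compact Hausdorff space, Y a real Banach space, E a closed subspace of C_b(L,Y), and E₀ = E ∩ C₀(L,Y). Assume the closed unit ball of E₀ is dense in the closed unit ball of E for the topology of uniform convergence on compact subsets of L. Then E₀ has the 3-ball property in E: for every f ∈ C_b(L,Y) in the closed unit ball of E, every g₁, g₂, g₃ in the closed unit ball of E₀ and every ε > 0 there exists g ∈ E₀ such that ‖f + gᵢ − g‖_∞ ≤ 1 + ε for i = 1, 2, 3. -/

import Mathlib

/-!
Choose compacts `K₀ ⊆ K₁ ⊆ ⋯` and approximants `hₖ` from the unit ball of `E₀` with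
`hₖ ≈ f` on `Kₖ` and `hₖ ≈ 0` off `Kₖ₊₁`, starting from a compact `K₀` off which all `gᵢ` are
small. At a point `t`, the term `f + gᵢ - hₖ` has norm about `1` except for the single index
`k` with `t ∈ Kₖ₊₁ \ Kₖ`, where it is at most about `2`. Averaging, `g = n⁻¹ ∑_{k<n} hₖ`
satisfies `‖f + gᵢ - g‖ ≤ 1 + 2δ + 1/n`.
-/

/-- A bounded continuous function vanishes at infinity if `{t | ε ≤ ‖f t‖}` is compact
for every `ε > 0`. -/
def ZeroAtInfty {L Y : Type*} [TopologicalSpace L] [NormedAddCommGroup Y]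
    (f : BoundedContinuousFunction L Y) : Prop :=
  ∀ ε > (0 : ℝ), IsCompact {t : L | ε ≤ ‖f t‖}

open BoundedContinuousFunction TopologicalSpace

lemma norm_sub_average_le {Y : Type*} [NormedAddCommGroup Y] [NormedSpace ℝ Y]
    {x : Y} {y : ℕ → Y} {c : ℝ} {b : ℕ → ℝ}
    (hy : ∀ k, ‖x - y k‖ ≤ c + b k) {n : ℕ} (hn : n ≠ 0) :
    ‖x - (n : ℝ)⁻¹ • ∑ k ∈ Finset.range n, y k‖
      ≤ c + (n : ℝ)⁻¹ * ∑ k ∈ Finset.range n, b k := by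
  have hn' : (0 : ℝ) < n := by positivity
  have havg : x - (n : ℝ)⁻¹ • ∑ k ∈ Finset.range n, y k
      = (n : ℝ)⁻¹ • ∑ k ∈ Finset.range n, (x - y k) := by
    rw [Finset.sum_sub_distrib, Finset.sum_const, Finset.card_range, smul_sub,
      ← Nat.cast_smul_eq_nsmul ℝ, smul_smul, inv_mul_cancel₀ hn'.ne', one_smul]
  calc ‖x - (n : ℝ)⁻¹ • ∑ k ∈ Finset.range n, y k‖
      ≤ (n : ℝ)⁻¹ * ∑ k ∈ Finset.range n, ‖x - y k‖ := by
        rw [havg, norm_smul, Real.norm_of_nonneg (by positivity)]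
        gcongr
        exact norm_sum_le _ _
    _ ≤ (n : ℝ)⁻¹ * ∑ k ∈ Finset.range n, (c + b k) := by gcongr with k; exact hy k
    _ = c + (n : ℝ)⁻¹ * ∑ k ∈ Finset.range n, b k := by
        rw [Finset.sum_add_distrib, Finset.sum_const, Finset.card_range, nsmul_eq_mul]
        field_simp

lemma sum_indicator_succ_sub_le_one {α : Type*} (K : ℕ → Set α) (t : α) (n : ℕ) :
    ∑ k ∈ Finset.range n, ((K (k + 1)).indicator 1 t - (K k).indicator 1 t) ≤ (1 : ℝ) := by
  rw [Finset.sum_range_sub (fun k => (K k).indicator (1 : α → ℝ) t)]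
  have h1 : (K n).indicator (1 : α → ℝ) t ≤ 1 :=
    Set.indicator_apply_le' (fun _ => le_rfl) (fun _ => zero_le_one)
  have h0 : 0 ≤ (K 0).indicator (1 : α → ℝ) t := Set.indicator_nonneg (fun _ _ => zero_le_one) t
  linarith

section BoundedContinuousFunction

variable {L Y : Type*} [TopologicalSpace L] [NormedAddCommGroup Y]

lemma zeroAtInfty_of_subset_isCompact {f : L →ᵇ Y}
    (hf : ∀ ε > (0 : ℝ), ∃ K, IsCompact K ∧ {t | ε ≤ ‖f t‖} ⊆ K) : ZeroAtInfty f := by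
  intro ε hε
  obtain ⟨K, hK, hsub⟩ := hf ε hε
  exact hK.of_isClosed_subset (isClosed_le continuous_const f.continuous.norm) hsub

lemma zeroAtInfty_zero : ZeroAtInfty (0 : L →ᵇ Y) := by
  refine zeroAtInfty_of_subset_isCompact fun ε hε => ⟨∅, isCompact_empty, fun t ht => ?_⟩
  simp only [Set.mem_ofPred_eq, coe_zero, Pi.zero_apply, norm_zero] at ht
  exact hε.not_ge ht

lemma ZeroAtInfty.add {f g : L →ᵇ Y} (hf : ZeroAtInfty f) (hg : ZeroAtInfty g) :
    ZeroAtInfty (f + g) := by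
  refine zeroAtInfty_of_subset_isCompact fun ε hε =>
    ⟨_, (hf (ε / 2) (by positivity)).union (hg (ε / 2) (by positivity)), fun t ht => ?_⟩
  by_contra hout
  simp only [Set.mem_union, Set.mem_ofPred_eq, not_or, not_le] at hout
  have : ‖f t + g t‖ ≤ ‖f t‖ + ‖g t‖ := norm_add_le _ _
  simp only [Set.mem_ofPred_eq, coe_add, Pi.add_apply] at ht
  linarith

lemma exists_monotone_approx_chain {S : Set (L →ᵇ Y)} (hS : ∀ g ∈ S, ZeroAtInfty g)
    {f : L →ᵇ Y} {δ : ℝ} (hδ : 0 < δ)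
    (happrox : ∀ K : Set L, IsCompact K → ∃ g ∈ S, ∀ t ∈ K, ‖f t - g t‖ ≤ δ)
    {K₀ : Set L} (hK₀ : IsCompact K₀) :
    ∃ (K : ℕ → Set L) (h : ℕ → L →ᵇ Y), Monotone K ∧ K 0 = K₀ ∧ (∀ k, h k ∈ S) ∧
      (∀ k, ∀ t ∈ K k, ‖f t - h k t‖ ≤ δ) ∧ ∀ k, ∀ t ∉ K (k + 1), ‖h k t‖ ≤ δ := by
  choose F hFS hFf using fun A : Compacts L => happrox A A.isCompact
  let level (A : Compacts L) : Compacts L := ⟨{t | δ ≤ ‖F A t‖}, hS _ (hFS A) δ hδ⟩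
  let K : ℕ → Compacts L := fun k => Nat.rec ⟨K₀, hK₀⟩ (fun _ A => A ⊔ level A) k
  refine ⟨fun k => SetLike.coe (K k), fun k => F (K k), fun a b hab => ?_, rfl, fun k => hFS _,
    fun k => ?_, fun k t ht => ?_⟩
  · exact monotone_nat_of_le_succ (f := K) (fun k => le_sup_left) hab
  · exact hFf (K k)
  · have : t ∉ level (K k) := fun hlevel => ht (Set.mem_union_right _ hlevel)
    exact (not_le.mp this).le

lemma norm_add_sub_le_of_chain {K : ℕ → Set L} (hK : Monotone K) {f g : L →ᵇ Y}
    {h : ℕ → L →ᵇ Y} {δ : ℝ} (hδ : 0 ≤ δ) (hf : ‖f‖ ≤ 1) (hg : ‖g‖ ≤ 1)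
    (hgK : {t | δ ≤ ‖g t‖} ⊆ K 0) (hh : ∀ k, ‖h k‖ ≤ 1)
    (happrox : ∀ k, ∀ t ∈ K k, ‖f t - h k t‖ ≤ δ) (hsmall : ∀ k, ∀ t ∉ K (k + 1), ‖h k t‖ ≤ δ)
    (k : ℕ) (t : L) :
    ‖f t + g t - h k t‖ ≤ 1 + 2 * δ + ((K (k + 1)).indicator 1 t - (K k).indicator 1 t) := by
  have hft : ‖f t‖ ≤ 1 := (f.norm_coe_le_norm t).trans hf
  have hgt : ‖g t‖ ≤ 1 := (g.norm_coe_le_norm t).trans hg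
  by_cases hk : t ∈ K k
  · have hk1 : t ∈ K (k + 1) := hK k.le_succ hk
    have := norm_add_le (f t - h k t) (g t)
    rw [Set.indicator_of_mem hk, Set.indicator_of_mem hk1, Pi.one_apply, add_sub_right_comm]
    linarith [happrox k t hk]
  have hg0 : ‖g t‖ ≤ δ := le_of_not_ge fun hδg => hk (hK (Nat.zero_le k) (hgK hδg))
  have htri : ‖f t + g t - h k t‖ ≤ ‖f t‖ + ‖g t‖ + ‖h k t‖ :=
    (norm_sub_le _ _).trans (by gcongr; exact norm_add_le _ _)
  rw [Set.indicator_of_notMem hk, sub_zero]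
  by_cases hk1 : t ∈ K (k + 1)
  · rw [Set.indicator_of_mem hk1, Pi.one_apply]
    linarith [((h k).norm_coe_le_norm t).trans (hh k)]
  · rw [Set.indicator_of_notMem hk1]
    linarith [hsmall k t hk1]

variable [NormedSpace ℝ Y]

lemma ZeroAtInfty.const_smul (c : ℝ) {f : L →ᵇ Y} (hf : ZeroAtInfty f) :
    ZeroAtInfty (c • f) := by
  refine zeroAtInfty_of_subset_isCompact fun ε hε =>
    ⟨_, hf (ε / (|c| + 1)) (by positivity), fun t ht => ?_⟩
  simp only [Set.mem_ofPred_eq, coe_smul, norm_smul, Real.norm_eq_abs] at ht ⊢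
  rw [div_le_iff₀ (by positivity)]
  nlinarith [norm_nonneg (f t)]

variable (L Y) in
def zeroAtInftySubmodule : Submodule ℝ (L →ᵇ Y) where
  carrier := {f | ZeroAtInfty f}
  add_mem' := ZeroAtInfty.add
  zero_mem' := zeroAtInfty_zero
  smul_mem' := ZeroAtInfty.const_smul

lemma norm_add_sub_average_le_of_chain {K : ℕ → Set L} (hK : Monotone K) {f g : L →ᵇ Y}
    {h : ℕ → L →ᵇ Y} {δ : ℝ} (hδ : 0 ≤ δ) (hf : ‖f‖ ≤ 1) (hg : ‖g‖ ≤ 1)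
    (hgK : {t | δ ≤ ‖g t‖} ⊆ K 0) (hh : ∀ k, ‖h k‖ ≤ 1)
    (happrox : ∀ k, ∀ t ∈ K k, ‖f t - h k t‖ ≤ δ) (hsmall : ∀ k, ∀ t ∉ K (k + 1), ‖h k t‖ ≤ δ)
    {n : ℕ} (hn : n ≠ 0) :
    ‖f + g - (n : ℝ)⁻¹ • ∑ k ∈ Finset.range n, h k‖ ≤ 1 + 2 * δ + (n : ℝ)⁻¹ := by
  refine (norm_le (by positivity)).2 fun t => ?_
  calc ‖(f + g - (n : ℝ)⁻¹ • ∑ k ∈ Finset.range n, h k) t‖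
      = ‖(f t + g t) - (n : ℝ)⁻¹ • ∑ k ∈ Finset.range n, h k t‖ := by simp
    _ ≤ 1 + 2 * δ + (n : ℝ)⁻¹ *
          ∑ k ∈ Finset.range n, ((K (k + 1)).indicator 1 t - (K k).indicator 1 t) :=
        norm_sub_average_le
          (norm_add_sub_le_of_chain hK hδ hf hg hgK hh happrox hsmall · t) hn
    _ ≤ 1 + 2 * δ + (n : ℝ)⁻¹ := by
        gcongr
        exact mul_le_of_le_one_right (by positivity) (sum_indicator_succ_sub_le_one K t n)

end BoundedContinuousFunction

theorem threeBallProperty_of_denseUnifOnCompacts_general {L Y : Type*}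
    [TopologicalSpace L]
    [NormedAddCommGroup Y] [NormedSpace ℝ Y]
    (E : Submodule ℝ (BoundedContinuousFunction L Y))
    (hdense : ∀ f ∈ E, ‖f‖ ≤ 1 → ∀ K : Set L, IsCompact K → ∀ ε > (0 : ℝ),
      ∃ g ∈ E, ZeroAtInfty g ∧ ‖g‖ ≤ 1 ∧ ∀ t ∈ K, ‖f t - g t‖ ≤ ε) :
    ∀ f ∈ E, ‖f‖ ≤ 1 →
      ∀ g₁ ∈ E, ∀ g₂ ∈ E, ∀ g₃ ∈ E,
        ZeroAtInfty g₁ → ZeroAtInfty g₂ → ZeroAtInfty g₃ →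
        ‖g₁‖ ≤ 1 → ‖g₂‖ ≤ 1 → ‖g₃‖ ≤ 1 →
        ∀ ε > (0 : ℝ), ∃ g ∈ E, ZeroAtInfty g ∧
          ‖f + g₁ - g‖ ≤ 1 + ε ∧ ‖f + g₂ - g‖ ≤ 1 + ε ∧ ‖f + g₃ - g‖ ≤ 1 + ε := by
  intro f hfE hf1 g₁ _ g₂ _ g₃ _ hz₁ hz₂ hz₃ hg₁ hg₂ hg₃ ε hε
  have hδ : 0 < ε / 4 := by positivity
  obtain ⟨K, h, hK, hK0, hhS, happrox, hsmall⟩ :=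
    exists_monotone_approx_chain (S := {g | g ∈ E ⊓ zeroAtInftySubmodule L Y ∧ ‖g‖ ≤ 1})
      (fun g hg => hg.1.2) hδ
      (fun K hK => by
        obtain ⟨g, hgE, hg0, hg1, hfg⟩ := hdense f hfE hf1 K hK _ hδ
        exact ⟨g, ⟨⟨hgE, hg0⟩, hg1⟩, hfg⟩)
      (((hz₁ _ hδ).union (hz₂ _ hδ)).union (hz₃ _ hδ))
  obtain ⟨n, hn⟩ := exists_nat_gt (ε / 2)⁻¹
  have hnε : (n : ℝ)⁻¹ < ε / 2 := inv_lt_of_inv_lt₀ (by positivity) hn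
  have hn0 : n ≠ 0 := by exact_mod_cast ((inv_pos.2 (by positivity : 0 < ε / 2)).trans hn).ne'
  have hmem := Submodule.smul_mem _ (n : ℝ)⁻¹ (Submodule.sum_mem (E ⊓ zeroAtInftySubmodule L Y)
    fun k (_ : k ∈ Finset.range n) => (hhS k).1)
  have hball : ∀ gᵢ : L →ᵇ Y, ‖gᵢ‖ ≤ 1 → {t | ε / 4 ≤ ‖gᵢ t‖} ⊆ K 0 →
      ‖f + gᵢ - (n : ℝ)⁻¹ • ∑ k ∈ Finset.range n, h k‖ ≤ 1 + ε := fun gᵢ hgᵢ hgᵢK =>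
    (norm_add_sub_average_le_of_chain hK hδ.le hf1 hgᵢ hgᵢK (fun k => (hhS k).2) happrox
      hsmall hn0).trans (by linarith)
  rw [hK0] at hball
  exact ⟨_, hmem.1, hmem.2,
    hball g₁ hg₁ (Set.subset_union_left.trans Set.subset_union_left),
    hball g₂ hg₂ (Set.subset_union_right.trans Set.subset_union_left),
    hball g₃ hg₃ Set.subset_union_right⟩

/-- If the closed unit ball of `E₀ = E ∩ C₀(L,Y)` is dense in the closed unit ball of `E`
for the topology of uniform convergence on compact subsets of `L`, then `E₀` has the
3-ball property in `E`. -/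
theorem threeBallProperty_of_denseUnifOnCompacts {L Y : Type*}
    [TopologicalSpace L] [LocallyCompactSpace L] [T2Space L]
    [NormedAddCommGroup Y] [NormedSpace ℝ Y] [CompleteSpace Y]
    (E : Submodule ℝ (BoundedContinuousFunction L Y))
    (hE : IsClosed (E : Set (BoundedContinuousFunction L Y)))
    (hdense : ∀ f ∈ E, ‖f‖ ≤ 1 → ∀ K : Set L, IsCompact K → ∀ ε > (0 : ℝ),
      ∃ g ∈ E, ZeroAtInfty g ∧ ‖g‖ ≤ 1 ∧ ∀ t ∈ K, ‖f t - g t‖ ≤ ε) :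
    ∀ f ∈ E, ‖f‖ ≤ 1 →
      ∀ g₁ ∈ E, ∀ g₂ ∈ E, ∀ g₃ ∈ E,
        ZeroAtInfty g₁ → ZeroAtInfty g₂ → ZeroAtInfty g₃ →
        ‖g₁‖ ≤ 1 → ‖g₂‖ ≤ 1 → ‖g₃‖ ≤ 1 →
        ∀ ε > (0 : ℝ), ∃ g ∈ E, ZeroAtInfty g ∧
          ‖f + g₁ - g‖ ≤ 1 + ε ∧ ‖f + g₂ - g‖ ≤ 1 + ε ∧ ‖f + g₃ - g‖ ≤ 1 + ε :=
  threeBallProperty_of_denseUnifOnCompacts_general E hdense
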